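/- arXiv:1901.01006 — 3 statements merged into one kernel-verified Lean document; each statement's English description precedes it below -/
import Mathlib

section
/- Let I = {α + GΓλ : ‖λ‖_∞ ≤ 1} with Γ = diag(γ), γ ≥ 0, and consider dynamics x(t+1) = A x(t) + C v(t) + w with disturbance zonotope V = ⟨c_V | G_V⟩ and box constraint X = {x : x̲ ≤ x ≤ x̄}. If for all t = 0,…,T: Aᵗα + Σ_{s=0}^{t-1} A^{t-1-s}(C c_V + w) − |Aᵗ G|γ − Σ_{s=0}^{t-1} |A^{t-1-s} C G_V|·1 ≥ x̲ and Aᵗα + Σ_{s=0}^{t-1} A^{t-1-s}(C c_V + w) + |Aᵗ G|γ + Σ_{s=0}^{t-1} |A^{t-1-s} C G_V|·1 ≤ x̄, then I ⊆ Inv_{[0,T]}(X), i.e., for every x(0) ∈ I and every admissible disturbance signal, x(t) ∈ X for t = 0,…,T. -/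
open Matrix Finset

lemma abs_mulVec_le_aux {d k : ℕ} (M : Matrix (Fin d) (Fin k) ℝ) (u : Fin k → ℝ)
    (h : ∀ i, |u i| ≤ 1) (j : Fin d) : |M.mulVec u j| ≤ ∑ i, |M j i| := by
  calc |M.mulVec u j| = |∑ i, M j i * u i| := by rfl
    _ ≤ ∑ i, |M j i * u i| := Finset.abs_sum_le_sum_abs _ _
    _ ≤ ∑ i, |M j i| := Finset.sum_le_sum fun i _ => by
        rw [abs_mul]; exact mul_le_of_le_one_right (abs_nonneg _) (h i)

lemma abs_mulVec_diag_le_aux {d k : ℕ} (M : Matrix (Fin d) (Fin k) ℝ) (γ u : Fin k → ℝ)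
    (hγ : ∀ i, 0 ≤ γ i) (h : ∀ i, |u i| ≤ 1) (j : Fin d) :
    |(M * Matrix.diagonal γ).mulVec u j| ≤ ∑ i, |M j i| * γ i := by
  calc |(M * Matrix.diagonal γ).mulVec u j| = |∑ i, M j i * γ i * u i| := by
        simp [Matrix.mulVec, dotProduct, Matrix.mul_diagonal]
    _ ≤ ∑ i, |M j i * γ i * u i| := Finset.abs_sum_le_sum_abs _ _
    _ ≤ ∑ i, |M j i| * γ i := Finset.sum_le_sum fun i _ => by
        rw [abs_mul, abs_mul, abs_of_nonneg (hγ i)]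
        exact mul_le_of_le_one_right (mul_nonneg (abs_nonneg _) (hγ i)) (h i)

theorem invariant_set_with_disturbance
    (d m n nV : ℕ)
    (A : Matrix (Fin d) (Fin d) ℝ) (C : Matrix (Fin d) (Fin m) ℝ) (w : Fin d → ℝ)
    (cV : Fin m → ℝ) (GV : Matrix (Fin m) (Fin nV) ℝ)
    (xlo xhi : Fin d → ℝ)
    (α : Fin d → ℝ) (G : Matrix (Fin d) (Fin n) ℝ) (γ : Fin n → ℝ)
    (T : ℕ)
    (hγ : ∀ i, 0 ≤ γ i)
    (hcon : ∀ t ≤ T, ∀ j : Fin d,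
      xlo j ≤ (A ^ t).mulVec α j +
          (∑ s ∈ Finset.range t, (A ^ (t - 1 - s)).mulVec (C.mulVec cV + w)) j -
          ∑ i, |((A ^ t) * G) j i| * γ i -
          ∑ s ∈ Finset.range t, ∑ i, |((A ^ (t - 1 - s)) * C * GV) j i| ∧
      (A ^ t).mulVec α j +
          (∑ s ∈ Finset.range t, (A ^ (t - 1 - s)).mulVec (C.mulVec cV + w)) j +
          ∑ i, |((A ^ t) * G) j i| * γ i +
          ∑ s ∈ Finset.range t, ∑ i, |((A ^ (t - 1 - s)) * C * GV) j i| ≤ xhi j) :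
    ∀ x : ℕ → Fin d → ℝ, ∀ v : ℕ → Fin m → ℝ,
      (∃ lam : Fin n → ℝ, (∀ i, |lam i| ≤ 1) ∧
          x 0 = α + (G * Matrix.diagonal γ).mulVec lam) →
      (∀ s, ∃ mu : Fin nV → ℝ, (∀ i, |mu i| ≤ 1) ∧ v s = cV + GV.mulVec mu) →
      (∀ t, x (t + 1) = A.mulVec (x t) + C.mulVec (v t) + w) →
      ∀ t ≤ T, ∀ j : Fin d, xlo j ≤ x t j ∧ x t j ≤ xhi j := by
  rintro x v ⟨lam, hlam, hx0⟩ hv hrec t ht j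
  choose mu hmu hveq using hv
  -- closed form
  have hx : ∀ t, x t = (A ^ t).mulVec (x 0)
      + ∑ s ∈ Finset.range t, (A ^ (t - 1 - s)).mulVec (C.mulVec (v s) + w) := by
    intro t
    induction t with
    | zero => simp [Matrix.one_mulVec]
    | succ t ih =>
      rw [hrec t, ih, Finset.sum_range_succ]
      have h0 : t + 1 - 1 - t = 0 := by omega
      rw [h0, pow_zero, Matrix.one_mulVec, Matrix.mulVec_add]
      have hA : A.mulVec ((A ^ t).mulVec (x 0)) = (A ^ (t + 1)).mulVec (x 0) := by
        rw [pow_succ', Matrix.mulVec_mulVec]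
      have hsum : A.mulVec (∑ s ∈ Finset.range t,
            (A ^ (t - 1 - s)).mulVec (C.mulVec (v s) + w))
          = ∑ s ∈ Finset.range t, (A ^ (t + 1 - 1 - s)).mulVec (C.mulVec (v s) + w) := by
        rw [show A.mulVec (∑ s ∈ Finset.range t, (A ^ (t - 1 - s)).mulVec (C.mulVec (v s) + w))
            = ∑ s ∈ Finset.range t, A.mulVec ((A ^ (t - 1 - s)).mulVec (C.mulVec (v s) + w))
          from map_sum (Matrix.mulVecLin A) _ _]
        refine Finset.sum_congr rfl fun s hs => ?_
        have hst : s < t := Finset.mem_range.mp hs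
        rw [show t + 1 - 1 - s = (t - 1 - s) + 1 from by omega, pow_succ',
          Matrix.mulVec_mulVec]
      rw [hA, hsum]
      abel
  -- decompose x t j
  have hdecomp : x t j = (A ^ t).mulVec α j
      + (∑ s ∈ Finset.range t, (A ^ (t - 1 - s)).mulVec (C.mulVec cV + w)) j
      + ((A ^ t) * G * Matrix.diagonal γ).mulVec lam j
      + ∑ s ∈ Finset.range t, ((A ^ (t - 1 - s)) * C * GV).mulVec (mu s) j := by
    rw [hx t, hx0]
    have h1 : (A ^ t).mulVec (α + (G * Matrix.diagonal γ).mulVec lam)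
        = (A ^ t).mulVec α + ((A ^ t) * G * Matrix.diagonal γ).mulVec lam := by
      rw [Matrix.mulVec_add, Matrix.mulVec_mulVec, Matrix.mul_assoc]
    have h2 : ∀ s, (A ^ (t - 1 - s)).mulVec (C.mulVec (v s) + w)
        = (A ^ (t - 1 - s)).mulVec (C.mulVec cV + w)
          + ((A ^ (t - 1 - s)) * C * GV).mulVec (mu s) := by
      intro s
      have hCv : C.mulVec (v s) + w = (C.mulVec cV + w) + (C * GV).mulVec (mu s) := by
        rw [hveq s, Matrix.mulVec_add, Matrix.mulVec_mulVec]; abel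
      rw [hCv, Matrix.mulVec_add, Matrix.mulVec_mulVec, ← Matrix.mul_assoc]
    rw [h1]
    simp only [h2, Finset.sum_add_distrib]
    simp [Pi.add_apply, Finset.sum_apply]
    ring
  have hb1 : |((A ^ t) * G * Matrix.diagonal γ).mulVec lam j|
      ≤ ∑ i, |((A ^ t) * G) j i| * γ i :=
    abs_mulVec_diag_le_aux _ _ _ hγ hlam j
  have hb2 : |∑ s ∈ Finset.range t, ((A ^ (t - 1 - s)) * C * GV).mulVec (mu s) j|
      ≤ ∑ s ∈ Finset.range t, ∑ i, |((A ^ (t - 1 - s)) * C * GV) j i| := by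
    calc _ ≤ ∑ s ∈ Finset.range t, |((A ^ (t - 1 - s)) * C * GV).mulVec (mu s) j| :=
          Finset.abs_sum_le_sum_abs _ _
      _ ≤ _ := Finset.sum_le_sum fun s _ => abs_mulVec_le_aux _ _ (hmu s) j
  obtain ⟨hlo, hhi⟩ := hcon t ht j
  rw [abs_le] at hb1 hb2
  constructor <;> [linarith [hb1.1, hb2.1]; linarith [hb1.2, hb2.2]]
end

section
/- Consider x(t+1) = A x(t) + B u(t) with box constraints X on the state and U on the input. Given {β(t), Φ(t)} for t = 0,…,T−1 such that for all t ≤ T the state constraints Aᵗα + Σ_{s<t} A^{t-1-s}Bβ(s) ∓ |AᵗGΓ + Σ_{s<t} A^{t-1-s}BΦ(s)|·1 satisfy the elementwise bounds x̲, x̄, and the input constraints β(t) ∓ |Φ(t)|·1 satisfy u̲, ū, then the zonotope I = ⟨α | GΓ⟩ is contained in the finite-horizon viability kernel Viab_{[0,T]}(X): for every x(0) ∈ I there is an admissible control signal u(·) with u(t) ∈ U keeping x(t) ∈ X for all t = 0,…,T. -/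
/-!
Run the affine feedback `u(t) = β(t) + Φ(t) λ` from `x(0) = α + GΓλ`. By variation of constants
the state is `x(t) = c(t) + M(t) λ` with `c(t) = Aᵗα + Σ_{s<t} A^{t-1-s}Bβ(s)` and
`M(t) = AᵗGΓ + Σ_{s<t} A^{t-1-s}BΦ(s)`, and likewise `u(t) = β(t) + Φ(t) λ`. Since `‖λ‖_∞ ≤ 1`,
each coordinate of `M λ` lies within `Σᵢ |M j i|` of zero, so the hypotheses put every `x(t)` in `X`
and every `u(t)` in `U`.
-/

open Matrix Finset

section Zonotope

variable {m n : Type*} [Fintype n]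

theorem abs_mulVec_apply_le_sum_abs (M : Matrix m n ℝ) {lam : n → ℝ}
    (hlam : ∀ i, |lam i| ≤ 1) (j : m) : |(M *ᵥ lam) j| ≤ ∑ i, |M j i| :=
  calc |(M *ᵥ lam) j| = |∑ i, M j i * lam i| := rfl
    _ ≤ ∑ i, |M j i * lam i| := abs_sum_le_sum_abs _ _
    _ ≤ ∑ i, |M j i| := sum_le_sum fun i _ => by
        rw [abs_mul]
        exact mul_le_of_le_one_right (abs_nonneg _) (hlam i)

theorem add_mulVec_apply_mem_of_bounds {lo hi : ℝ} (c : m → ℝ) (M : Matrix m n ℝ)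
    {lam : n → ℝ} (hlam : ∀ i, |lam i| ≤ 1) (j : m)
    (h : lo ≤ c j - ∑ i, |M j i| ∧ c j + ∑ i, |M j i| ≤ hi) :
    lo ≤ (c + M *ᵥ lam) j ∧ (c + M *ᵥ lam) j ≤ hi := by
  have hM := abs_le.mp (abs_mulVec_apply_le_sum_abs M hlam j)
  rw [Pi.add_apply]
  constructor <;> linarith [h.1, h.2, hM.1, hM.2]

end Zonotope

section Trajectory

variable {m k : Type*} [Fintype m] [DecidableEq m] [Fintype k]

def trajectory (A : Matrix m m ℝ) (B : Matrix m k ℝ) (x₀ : m → ℝ) (u : ℕ → k → ℝ) (t : ℕ) :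
    m → ℝ :=
  (A ^ t) *ᵥ x₀ + ∑ s ∈ range t, (A ^ (t - 1 - s) * B) *ᵥ u s

theorem trajectory_zero (A : Matrix m m ℝ) (B : Matrix m k ℝ) (x₀ : m → ℝ) (u : ℕ → k → ℝ) :
    trajectory A B x₀ u 0 = x₀ := by
  simp [trajectory]

theorem trajectory_succ (A : Matrix m m ℝ) (B : Matrix m k ℝ) (x₀ : m → ℝ) (u : ℕ → k → ℝ)
    (t : ℕ) :
    trajectory A B x₀ u (t + 1) = A *ᵥ trajectory A B x₀ u t + B *ᵥ u t := by
  have hpow : ∀ s ∈ range t, A ^ (t - s) = A * A ^ (t - 1 - s) := fun s hs => by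
    rw [← pow_succ']
    congr 1
    have := mem_range.mp hs
    omega
  simp only [trajectory, sum_range_succ, Nat.add_sub_cancel, Nat.sub_self, pow_zero, pow_succ',
    mulVec_add, mulVec_sum, ← mulVec_mulVec, one_mulVec]
  rw [add_assoc]
  congr 2
  exact sum_congr rfl fun s hs => by rw [hpow s hs, ← mulVec_mulVec]

variable {n : Type*} [Fintype n]

theorem trajectory_affine_feedback (A : Matrix m m ℝ) (B : Matrix m k ℝ) (α : m → ℝ)
    (K : Matrix m n ℝ) (β : ℕ → k → ℝ) (Φ : ℕ → Matrix k n ℝ) (lam : n → ℝ) (t : ℕ) :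
    trajectory A B (α + K *ᵥ lam) (fun s => β s + Φ s *ᵥ lam) t =
      ((A ^ t) *ᵥ α + ∑ s ∈ range t, (A ^ (t - 1 - s) * B) *ᵥ β s) +
        ((A ^ t) * K + ∑ s ∈ range t, A ^ (t - 1 - s) * B * Φ s) *ᵥ lam := by
  simp only [trajectory, mulVec_add, add_mulVec, sum_mulVec, mulVec_mulVec, sum_add_distrib]
  abel

end Trajectory

theorem viable_set_no_disturbance_general
    (dx du n : ℕ)
    (A : Matrix (Fin dx) (Fin dx) ℝ) (B : Matrix (Fin dx) (Fin du) ℝ)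
    (xlo xhi : Fin dx → ℝ) (ulo uhi : Fin du → ℝ)
    (α : Fin dx → ℝ) (G : Matrix (Fin dx) (Fin n) ℝ) (γ : Fin n → ℝ)
    (β : ℕ → Fin du → ℝ) (Φ : ℕ → Matrix (Fin du) (Fin n) ℝ)
    (T : ℕ)
    (hstate : ∀ t ≤ T, ∀ j : Fin dx,
      xlo j ≤ ((A ^ t).mulVec α +
            ∑ s ∈ Finset.range t, ((A ^ (t - 1 - s)) * B).mulVec (β s)) j -
          ∑ i, |((A ^ t) * G * Matrix.diagonal γ +
            ∑ s ∈ Finset.range t, (A ^ (t - 1 - s)) * B * Φ s) j i| ∧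
      ((A ^ t).mulVec α +
            ∑ s ∈ Finset.range t, ((A ^ (t - 1 - s)) * B).mulVec (β s)) j +
          ∑ i, |((A ^ t) * G * Matrix.diagonal γ +
            ∑ s ∈ Finset.range t, (A ^ (t - 1 - s)) * B * Φ s) j i| ≤ xhi j)
    (hinput : ∀ t ≤ T, ∀ j : Fin du,
      ulo j ≤ β t j - ∑ i, |(Φ t) j i| ∧ β t j + ∑ i, |(Φ t) j i| ≤ uhi j) :
    ∀ x₀ : Fin dx → ℝ,
      (∃ lam : Fin n → ℝ, (∀ i, |lam i| ≤ 1) ∧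
          x₀ = α + (G * Matrix.diagonal γ).mulVec lam) →
      ∃ u : ℕ → Fin du → ℝ, ∃ x : ℕ → Fin dx → ℝ,
        x 0 = x₀ ∧
        (∀ t, x (t + 1) = A.mulVec (x t) + B.mulVec (u t)) ∧
        (∀ t ≤ T, ∀ j : Fin du, ulo j ≤ u t j ∧ u t j ≤ uhi j) ∧
        (∀ t ≤ T, ∀ j : Fin dx, xlo j ≤ x t j ∧ x t j ≤ xhi j) := by
  rintro x₀ ⟨lam, hlam, rfl⟩
  set u : ℕ → Fin du → ℝ := fun t => β t + Φ t *ᵥ lam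
  refine ⟨u, trajectory A B (α + (G * diagonal γ) *ᵥ lam) u, trajectory_zero .., trajectory_succ A B _ u,
    fun t ht j => add_mulVec_apply_mem_of_bounds _ _ hlam j (hinput t ht j),
    fun t ht j => ?_⟩
  rw [trajectory_affine_feedback, ← Matrix.mul_assoc]
  exact add_mulVec_apply_mem_of_bounds _ _ hlam j (hstate t ht j)

theorem viable_set_no_disturbance
    (dx du n : ℕ)
    (A : Matrix (Fin dx) (Fin dx) ℝ) (B : Matrix (Fin dx) (Fin du) ℝ)
    (xlo xhi : Fin dx → ℝ) (ulo uhi : Fin du → ℝ)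
    (α : Fin dx → ℝ) (G : Matrix (Fin dx) (Fin n) ℝ) (γ : Fin n → ℝ)
    (β : ℕ → Fin du → ℝ) (Φ : ℕ → Matrix (Fin du) (Fin n) ℝ)
    (T : ℕ)
    (hγ : ∀ i, 0 ≤ γ i)
    (hstate : ∀ t ≤ T, ∀ j : Fin dx,
      xlo j ≤ ((A ^ t).mulVec α +
            ∑ s ∈ Finset.range t, ((A ^ (t - 1 - s)) * B).mulVec (β s)) j -
          ∑ i, |((A ^ t) * G * Matrix.diagonal γ +
            ∑ s ∈ Finset.range t, (A ^ (t - 1 - s)) * B * Φ s) j i| ∧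
      ((A ^ t).mulVec α +
            ∑ s ∈ Finset.range t, ((A ^ (t - 1 - s)) * B).mulVec (β s)) j +
          ∑ i, |((A ^ t) * G * Matrix.diagonal γ +
            ∑ s ∈ Finset.range t, (A ^ (t - 1 - s)) * B * Φ s) j i| ≤ xhi j)
    (hinput : ∀ t ≤ T, ∀ j : Fin du,
      ulo j ≤ β t j - ∑ i, |(Φ t) j i| ∧ β t j + ∑ i, |(Φ t) j i| ≤ uhi j) :
    ∀ x₀ : Fin dx → ℝ,
      (∃ lam : Fin n → ℝ, (∀ i, |lam i| ≤ 1) ∧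
          x₀ = α + (G * Matrix.diagonal γ).mulVec lam) →
      ∃ u : ℕ → Fin du → ℝ, ∃ x : ℕ → Fin dx → ℝ,
        x 0 = x₀ ∧
        (∀ t, x (t + 1) = A.mulVec (x t) + B.mulVec (u t)) ∧
        (∀ t ≤ T, ∀ j : Fin du, ulo j ≤ u t j ∧ u t j ≤ uhi j) ∧
        (∀ t ≤ T, ∀ j : Fin dx, xlo j ≤ x t j ∧ x t j ≤ xhi j) :=
  viable_set_no_disturbance_general dx du n A B xlo xhi ulo uhi α G γ β Φ T hstate hinput
end

section
/- For the system x(t+1) = Ax(t)+Bu(t)+Cv(t)+w with box state constraint X and box input constraint U, given parameters {β(t), Φ(t), ψ(t)} satisfying both the input containment inequalities β(t) ∓ (|Φ(t)|·1 + |F(t)|ψ(t)) within [u̲, ū] and the state inequalities Aᵗα + Σ_{s<t} A^{t-1-s}(Bβ(s)+Cc_V+w) ∓ (|AᵗGΓ + Σ_{s<t}A^{t-1-s}BΦ(s)|·1 + Σ_{s<t}|A^{t-1-s}BF(s)|ψ(s) + Σ_{s<t}|A^{t-1-s}CG_V|·1) within [x̲, x̄] for all t = 0,…,T, then the zonotope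 I = ⟨α | GΓ⟩ is contained in the finite-horizon discriminating kernel Disc_{[0,T]}(X): for every x(0) ∈ I there exists a (nonanticipative) control strategy with u(t) ∈ U such that for every disturbance signal v(t) ∈ V the trajectory satisfies x(t) ∈ X for all t = 0,…,T. -/
open Matrix Finset

lemma mulVec_sum' {a b : ℕ} (M : Matrix (Fin a) (Fin b) ℝ) {ι : Type*} (S : Finset ι)
    (f : ι → Fin b → ℝ) : M.mulVec (∑ s ∈ S, f s) = ∑ s ∈ S, M.mulVec (f s) := by
  ext j
  simp only [Matrix.mulVec, dotProduct, Finset.sum_apply, Finset.mul_sum]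
  exact Finset.sum_comm

lemma absRowSumBound {a b : ℕ} (M : Matrix (Fin a) (Fin b) ℝ) (v : Fin b → ℝ)
    (hv : ∀ i, |v i| ≤ 1) (j : Fin a) : |M.mulVec v j| ≤ ∑ i, |M j i| := by
  calc |∑ i, M j i * v i| ≤ ∑ i, |M j i * v i| := Finset.abs_sum_le_sum_abs _ _
    _ ≤ ∑ i, |M j i| := Finset.sum_le_sum fun i _ => by
        rw [abs_mul]; exact mul_le_of_le_one_right (abs_nonneg _) (hv i)

theorem discriminating_set_containment
    (dx du dv n nF nV : ℕ)
    (A : Matrix (Fin dx) (Fin dx) ℝ) (B : Matrix (Fin dx) (Fin du) ℝ)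
    (C : Matrix (Fin dx) (Fin dv) ℝ) (w : Fin dx → ℝ)
    (xlo xhi : Fin dx → ℝ) (ulo uhi : Fin du → ℝ)
    (α : Fin dx → ℝ) (G : Matrix (Fin dx) (Fin n) ℝ) (γ : Fin n → ℝ)
    (β : ℕ → Fin du → ℝ) (Φ : ℕ → Matrix (Fin du) (Fin n) ℝ)
    (F : ℕ → Matrix (Fin du) (Fin nF) ℝ) (ψ : ℕ → Fin nF → ℝ)
    (cV : Fin dv → ℝ) (GV : Matrix (Fin dv) (Fin nV) ℝ)
    (T : ℕ)
    (hγ : ∀ i, 0 ≤ γ i)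
    (hψ : ∀ t i, 0 ≤ ψ t i)
    (hinput : ∀ t ≤ T, ∀ j : Fin du,
      ulo j ≤ β t j - (∑ i, |(Φ t) j i| + ∑ i, |(F t) j i| * ψ t i) ∧
      β t j + (∑ i, |(Φ t) j i| + ∑ i, |(F t) j i| * ψ t i) ≤ uhi j)
    (hstate : ∀ t ≤ T, ∀ j : Fin dx,
      xlo j ≤ ((A ^ t).mulVec α +
            ∑ s ∈ Finset.range t,
              (A ^ (t - 1 - s)).mulVec (B.mulVec (β s) + C.mulVec cV + w)) j -
          (∑ i, |((A ^ t) * G * Matrix.diagonal γ +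
              ∑ s ∈ Finset.range t, (A ^ (t - 1 - s)) * B * Φ s) j i| +
           ∑ s ∈ Finset.range t, ∑ i, |((A ^ (t - 1 - s)) * B * F s) j i| * ψ s i +
           ∑ s ∈ Finset.range t, ∑ i, |((A ^ (t - 1 - s)) * C * GV) j i|) ∧
      ((A ^ t).mulVec α +
            ∑ s ∈ Finset.range t,
              (A ^ (t - 1 - s)).mulVec (B.mulVec (β s) + C.mulVec cV + w)) j +
          (∑ i, |((A ^ t) * G * Matrix.diagonal γ +
              ∑ s ∈ Finset.range t, (A ^ (t - 1 - s)) * B * Φ s) j i| +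
           ∑ s ∈ Finset.range t, ∑ i, |((A ^ (t - 1 - s)) * B * F s) j i| * ψ s i +
           ∑ s ∈ Finset.range t, ∑ i, |((A ^ (t - 1 - s)) * C * GV) j i|) ≤ xhi j) :
    ∀ x₀ : Fin dx → ℝ,
      (∃ lam : Fin n → ℝ, (∀ i, |lam i| ≤ 1) ∧
          x₀ = α + (G * Matrix.diagonal γ).mulVec lam) →
      ∃ u : (ℕ → Fin dv → ℝ) → ℕ → Fin du → ℝ,
        (∀ v v' : ℕ → Fin dv → ℝ, ∀ t, (∀ s < t, v s = v' s) → u v t = u v' t) ∧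
        ∀ v : ℕ → Fin dv → ℝ,
          (∀ s, ∃ mu : Fin nV → ℝ, (∀ i, |mu i| ≤ 1) ∧ v s = cV + GV.mulVec mu) →
          ∀ x : ℕ → Fin dx → ℝ,
            x 0 = x₀ →
            (∀ t, x (t + 1) =
              A.mulVec (x t) + B.mulVec (u v t) + C.mulVec (v t) + w) →
            (∀ t ≤ T, ∀ j : Fin du, ulo j ≤ u v t j ∧ u v t j ≤ uhi j) ∧
            (∀ t ≤ T, ∀ j : Fin dx, xlo j ≤ x t j ∧ x t j ≤ xhi j) := by
  intro x₀ hx₀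
  obtain ⟨lam, hlam, hx0eq⟩ := hx₀
  refine ⟨fun _ t => β t + (Φ t).mulVec lam, fun _ _ _ _ => rfl, ?_⟩
  intro v hv x hx0 hdyn
  choose mu hmu hveq using hv
  -- closed-form trajectory
  have traj : ∀ t, x t =
      ((A ^ t).mulVec α +
        ∑ s ∈ Finset.range t, (A ^ (t - 1 - s)).mulVec (B.mulVec (β s) + C.mulVec cV + w)) +
      ((A ^ t) * G * Matrix.diagonal γ +
        ∑ s ∈ Finset.range t, (A ^ (t - 1 - s)) * B * Φ s).mulVec lam +
      ∑ s ∈ Finset.range t, ((A ^ (t - 1 - s)) * C * GV).mulVec (mu s) := by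
    intro t
    induction t with
    | zero =>
      simp [hx0, hx0eq, Matrix.one_mulVec, Matrix.one_mul]
    | succ t ih =>
      have hpow : ∀ s < t, A ^ (t - s) = A * A ^ (t - 1 - s) := by
        intro s hs
        have h1 : t - 1 - s = t - s - 1 := by omega
        have h2 : t - s - 1 + 1 = t - s := by omega
        rw [h1, ← pow_succ', h2]
      rw [hdyn t, ih, hveq t]
      have e1 : ∀ s, t + 1 - 1 - s = t - s := fun s => by omega
      simp only [e1]
      rw [Finset.sum_range_succ, Finset.sum_range_succ, Finset.sum_range_succ]
      have sum1 : (∑ s ∈ Finset.range t,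
            (A ^ (t - s)).mulVec (B.mulVec (β s) + C.mulVec cV + w)) =
          A.mulVec (∑ s ∈ Finset.range t,
            (A ^ (t - 1 - s)).mulVec (B.mulVec (β s) + C.mulVec cV + w)) := by
        rw [mulVec_sum']
        refine Finset.sum_congr rfl fun s hs => ?_
        rw [hpow s (Finset.mem_range.mp hs), ← Matrix.mulVec_mulVec]
      have sum2 : (∑ s ∈ Finset.range t, (A ^ (t - s)) * B * Φ s) =
          A * (∑ s ∈ Finset.range t, (A ^ (t - 1 - s)) * B * Φ s) := by
        rw [Matrix.mul_sum]
        refine Finset.sum_congr rfl fun s hs => ?_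
        simp [hpow s (Finset.mem_range.mp hs), Matrix.mul_assoc]
      have sum3 : (∑ s ∈ Finset.range t, ((A ^ (t - s)) * C * GV).mulVec (mu s)) =
          A.mulVec (∑ s ∈ Finset.range t, ((A ^ (t - 1 - s)) * C * GV).mulVec (mu s)) := by
        rw [mulVec_sum']
        refine Finset.sum_congr rfl fun s hs => ?_
        simp [hpow s (Finset.mem_range.mp hs), ← Matrix.mulVec_mulVec, Matrix.mul_assoc]
      rw [sum1, sum2, sum3]
      have hA : A ^ (t + 1) = A * A ^ t := by rw [← pow_succ']
      simp only [hA, Nat.sub_self, pow_zero, Matrix.one_mulVec, Matrix.one_mul,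
        Matrix.mulVec_add, Matrix.add_mulVec, ← Matrix.mulVec_mulVec,
        Matrix.mul_assoc]
      abel
  constructor
  · intro t ht j
    obtain ⟨hl, hr⟩ := hinput t ht j
    have hb : |(Φ t).mulVec lam j| ≤ ∑ i, |(Φ t) j i| := absRowSumBound _ _ hlam j
    have hnn : 0 ≤ ∑ i, |(F t) j i| * ψ t i :=
      Finset.sum_nonneg fun i _ => mul_nonneg (abs_nonneg _) (hψ t i)
    have := abs_le.mp hb
    constructor
    · simp only [Pi.add_apply]; linarith [this.1]
    · simp only [Pi.add_apply]; linarith [this.2]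
  · intro t ht j
    obtain ⟨hl, hr⟩ := hstate t ht j
    have hxj := congrFun (traj t) j
    simp only [Pi.add_apply, Finset.sum_apply] at hxj hl hr
    have hb1 : |((A ^ t) * G * Matrix.diagonal γ +
        ∑ s ∈ Finset.range t, (A ^ (t - 1 - s)) * B * Φ s).mulVec lam j| ≤
        ∑ i, |((A ^ t) * G * Matrix.diagonal γ +
        ∑ s ∈ Finset.range t, (A ^ (t - 1 - s)) * B * Φ s) j i| := absRowSumBound _ _ hlam j
    have hb2 : |∑ s ∈ Finset.range t, ((A ^ (t - 1 - s)) * C * GV).mulVec (mu s) j| ≤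
        ∑ s ∈ Finset.range t, ∑ i, |((A ^ (t - 1 - s)) * C * GV) j i| := by
      calc _ ≤ ∑ s ∈ Finset.range t, |((A ^ (t - 1 - s)) * C * GV).mulVec (mu s) j| :=
            Finset.abs_sum_le_sum_abs _ _
        _ ≤ _ := Finset.sum_le_sum fun s _ => absRowSumBound _ _ (hmu s) j
    have hnn : 0 ≤ ∑ s ∈ Finset.range t, ∑ i, |((A ^ (t - 1 - s)) * B * F s) j i| * ψ s i :=
      Finset.sum_nonneg fun s _ => Finset.sum_nonneg fun i _ =>
        mul_nonneg (abs_nonneg _) (hψ s i)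
    have h1 := abs_le.mp hb1
    have h2 := abs_le.mp hb2
    constructor
    · rw [hxj]; linarith [h1.1, h2.1]
    · rw [hxj]; linarith [h1.2, h2.2]
end
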